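/- arXiv:2008.03538 — 7 statements merged into one kernel-verified Lean document; each statement's English description precedes it below -/
import Mathlib

section
/- Let L be a reflective subuniverse of types and f : A → B a map. The following are equivalent: (i) f is an L-equivalence; (ii) for every L-local type X, precomposition with f is a bijection (B → X) → (A → X); (iii) f is left orthogonal to every map between L-local types; (iv) f is left orthogonal to every L-étale map. In particular, the class of L-equivalences equals the class of maps left orthogonal to every L-étale map. -/
universe u

/-- A reflective subuniverse of `Type u`: a predicate `IsLocal` on types, an
operation `L`, and unit maps `unit X : X → L X`, such that `L X` is local and
precomposition with the unit is a bijection into maps to any local type. -/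
structure ReflSub : Type (u + 1) where
  IsLocal : Type u → Prop
  L : Type u → Type u
  unit : ∀ X : Type u, X → L X
  local_L : ∀ X : Type u, IsLocal (L X)
  univ : ∀ (X Z : Type u), IsLocal Z →
    Function.Bijective (fun g : L X → Z => g ∘ unit X)

/-- The functorial action `L f : L A → L B`, the unique map with
`L f ∘ η_A = η_B ∘ f`. -/
noncomputable def ReflSub.map (R : ReflSub.{u}) {A B : Type u} (f : A → B) :
    R.L A → R.L B :=
  Function.surjInv (R.univ A (R.L B) (R.local_L B)).2 (R.unit B ∘ f)

/-- `f` is an `L`-equivalence if `L f` is a bijection. -/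
def ReflSub.IsEquiv (R : ReflSub.{u}) {A B : Type u} (f : A → B) : Prop :=
  Function.Bijective (R.map f)

/-- `f : A → B` is left orthogonal to `g : X → Y` (equivalently, `g` is right
orthogonal to `f`) if every commuting square from `f` to `g` admits a unique
diagonal filler. -/
def LeftOrth {A B X Y : Type u} (f : A → B) (g : X → Y) : Prop :=
  ∀ (u : A → X) (v : B → Y), g ∘ u = v ∘ f →
    ∃! d : B → X, d ∘ f = u ∧ g ∘ d = v

/-- The square with projections `pa : P → A`, `pb : P → B` over the cospan
`f : A → C`, `g : B → C` commutes and is a pullback square: the induced map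
`P → A ×_C B` is a bijection. -/
def IsPullbackSq {P A B C : Type u} (pa : P → A) (pb : P → B)
    (f : A → C) (g : B → C) : Prop :=
  (∀ p, f (pa p) = g (pb p)) ∧
    ∀ (a : A) (b : B), f a = g b → ∃! p : P, pa p = a ∧ pb p = b

/-- `f : A → B` is `L`-étale if its `L`-naturality square is a pullback square,
i.e. the induced map `A → B ×_{L B} L A` is a bijection. -/
def ReflSub.IsEtale (R : ReflSub.{u}) {A B : Type u} (f : A → B) : Prop :=
  IsPullbackSq f (R.unit A) (R.unit B) (R.map f)

/-- A map is `L`-local if each of its fibers is an `L`-local type. -/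
def ReflSub.IsLocalMap (R : ReflSub.{u}) {X Y : Type u} (g : X → Y) : Prop :=
  ∀ y : Y, R.IsLocal {x : X // g x = y}

/-- A map is `L`-connected if `L` of each of its fibers has exactly one
element. -/
def ReflSub.IsConnMap (R : ReflSub.{u}) {X Y : Type u} (g : X → Y) : Prop :=
  ∀ y : Y, ∃ z : R.L {x : X // g x = y}, ∀ w : R.L {x : X // g x = y}, w = z

/-- `L` is a modality if the `L`-local types are closed under dependent sums. -/
def ReflSub.IsModality (R : ReflSub.{u}) : Prop :=
  ∀ (X : Type u) (P : X → Type u), R.IsLocal X → (∀ x, R.IsLocal (P x)) →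
    R.IsLocal (Σ x, P x)

/-- `L` is lex if applying `L` to any pullback square yields a pullback
square. -/
def ReflSub.IsLex (R : ReflSub.{u}) : Prop :=
  ∀ (E' E B' B : Type u) (p' : E' → B') (g : E' → E) (f : B' → B) (p : E → B),
    IsPullbackSq p' g f p →
    IsPullbackSq (R.map p') (R.map g) (R.map f) (R.map p)

/-! An `L`-equivalence is exactly a map that local types cannot tell apart from an isomorphism:
precomposition with `f` into a local type `X` corresponds, through the universal property of the
units, to precomposition with `L f`, and by a Yoneda argument among the local types `L A`, `L B`
this is bijective for all local `X` iff `L f` is. Bijectivity of precomposition into `X` and `Y`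
gives unique fillers against any `g : X → Y`. An `L`-étale map is a pullback of `L g`, a map
between local types, and right orthogonality is stable under pullback. Conversely, for local `X`
the map `X → L PUnit` is étale, and orthogonality against it is bijectivity of precomposition
into `X` (the target is `L PUnit` because `IsLocal` need not hold for `PUnit` itself). -/

open Function

section Orthogonality

variable {A B : Type u}

theorem bijective_of_bijective_comp_right {P Q : Type u} {φ : P → Q}
    (hP : Bijective fun h : Q → P => h ∘ φ) (hQ : Bijective fun h : Q → Q => h ∘ φ) :
    Bijective φ := by
  obtain ⟨ψ, hψ : ψ ∘ φ = id⟩ := hP.2 id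
  have hφψ : φ ∘ ψ = id := hQ.1 (show φ ∘ ψ ∘ φ = id ∘ φ by rw [hψ]; rfl)
  exact ⟨LeftInverse.injective (congrFun hψ), RightInverse.surjective (congrFun hφψ)⟩

theorem leftOrth_of_bijective_comp_right {X Y : Type u} {f : A → B} (g : X → Y)
    (hX : Bijective fun h : B → X => h ∘ f) (hY : Bijective fun h : B → Y => h ∘ f) :
    LeftOrth f g := by
  intro u v hsq
  obtain ⟨d, hd : d ∘ f = u⟩ := hX.2 u
  refine ⟨d, ⟨hd, hY.1 ?_⟩, fun e he => hX.1 (he.1.trans hd.symm)⟩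
  change g ∘ (d ∘ f) = v ∘ f
  rw [hd, hsq]

theorem LeftOrth.bijective_comp_right {X Y : Type u} [Unique Y] {f : A → B} {g : X → Y}
    (hfg : LeftOrth f g) : Bijective fun h : B → X => h ∘ f := by
  refine (bijective_iff_existsUnique _).2 fun u => ?_
  obtain ⟨d, ⟨hd, -⟩, hd_uniq⟩ := hfg u (fun _ => default) (Subsingleton.elim _ _)
  exact ⟨d, hd, fun e he => hd_uniq e ⟨he, Subsingleton.elim _ _⟩⟩

/-- Right orthogonality is stable under base change: `pa` is the pullback of `g` along `k`. -/
theorem LeftOrth.of_isPullbackSq {P X Y Z : Type u} {f : A → B} {pa : P → X} {pb : P → Y}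
    {k : X → Z} {g : Y → Z} (hpb : IsPullbackSq pa pb k g) (hfg : LeftOrth f g) :
    LeftOrth f pa := by
  intro u v hsq
  have hsq' : g ∘ (pb ∘ u) = (k ∘ v) ∘ f := by
    funext a
    simp only [comp_apply, ← hpb.1 (u a)]
    exact congrArg k (congrFun hsq a)
  obtain ⟨d', ⟨hd'f, hd'g⟩, hd'_uniq⟩ := hfg (pb ∘ u) (k ∘ v) hsq'
  choose d hd hd_uniq using fun b => hpb.2 (v b) (d' b) (congrFun hd'g b).symm
  refine ⟨d, ⟨funext fun a => ?_, funext fun b => (hd b).1⟩, ?_⟩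
  · exact (hd_uniq (f a) (u a) ⟨congrFun hsq a, (congrFun hd'f a).symm⟩).symm
  · rintro e ⟨hef, hev⟩
    have hpbe : pb ∘ e = d' := hd'_uniq _ ⟨by rw [comp_assoc, hef], by
      funext b; simp only [comp_apply, ← hpb.1 (e b)]; exact congrArg k (congrFun hev b)⟩
    exact funext fun b => hd_uniq b (e b) ⟨congrFun hev b, congrFun hpbe b⟩

end Orthogonality

namespace ReflSub

variable (R : ReflSub.{u})

theorem map_comp_unit {A B : Type u} (f : A → B) : R.map f ∘ R.unit A = R.unit B ∘ f :=
  surjInv_eq (R.univ A (R.L B) (R.local_L B)).2 (R.unit B ∘ f)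

theorem unit_bijective {X : Type u} (hX : R.IsLocal X) : Bijective (R.unit X) :=
  bijective_of_bijective_comp_right (R.univ X X hX) (R.univ X (R.L X) (R.local_L X))

instance : Unique (R.L PUnit) where
  default := R.unit PUnit PUnit.unit
  uniq z := congrFun ((R.univ PUnit (R.L PUnit) (R.local_L PUnit)).1
    (show id ∘ R.unit PUnit = (fun _ => R.unit PUnit PUnit.unit) ∘ R.unit PUnit from rfl)) z

theorem isEtale_of_isLocal {X Y : Type u} {g : X → Y} (hX : R.IsLocal X) (hY : R.IsLocal Y) :
    R.IsEtale g := by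
  refine ⟨fun x => (congrFun (R.map_comp_unit g) x).symm, fun y z hyz => ?_⟩
  obtain ⟨x, rfl⟩ := (R.unit_bijective hX).2 z
  refine ⟨x, ⟨(R.unit_bijective hY).1 ?_, rfl⟩, fun x' hx' => (R.unit_bijective hX).1 hx'.2⟩
  rw [hyz, ← comp_apply (f := R.map g), R.map_comp_unit, comp_apply]

theorem bijective_comp_right_iff_comp_map {A B X : Type u} (f : A → B) (hX : R.IsLocal X) :
    (Bijective fun h : B → X => h ∘ f) ↔ Bijective fun h : R.L B → X => h ∘ R.map f := by
  have hsq : ((fun h : B → X => h ∘ f) ∘ fun h : R.L B → X => h ∘ R.unit B) =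
      (fun h : R.L A → X => h ∘ R.unit A) ∘ fun h : R.L B → X => h ∘ R.map f := by
    funext h
    simp only [comp_apply, comp_assoc, R.map_comp_unit]
  rw [← Bijective.of_comp_iff _ (R.univ B X hX), hsq, Bijective.of_comp_iff' (R.univ A X hX)]

theorem isEquiv_iff_bijective_comp_right {A B : Type u} (f : A → B) :
    R.IsEquiv f ↔ ∀ X : Type u, R.IsLocal X → Bijective fun h : B → X => h ∘ f := by
  refine ⟨fun hf X hX => (R.bijective_comp_right_iff_comp_map f hX).2 hf.comp_right,
    fun h => ?_⟩
  have hL := fun X (hX : R.IsLocal X) => (R.bijective_comp_right_iff_comp_map f hX).1 (h X hX)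
  exact bijective_of_bijective_comp_right (hL _ (R.local_L A)) (hL _ (R.local_L B))

end ReflSub

/-- Characterization of `L`-equivalences (Prop. 2.1 / i₁): `f` is an
`L`-equivalence iff precomposition into local types is a bijection, iff `f` is
left orthogonal to every map between local types, iff `f` is left orthogonal
to every `L`-étale map.  In particular the `L`-equivalences are exactly the
maps left orthogonal to all `L`-étale maps. -/
theorem stmt_0 (R : ReflSub.{u}) (A B : Type u) (f : A → B) :
    List.TFAE [
      R.IsEquiv f,
      ∀ X : Type u, R.IsLocal X → Function.Bijective (fun h : B → X => h ∘ f),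
      ∀ (X Y : Type u) (g : X → Y), R.IsLocal X → R.IsLocal Y → LeftOrth f g,
      ∀ (X Y : Type u) (g : X → Y), R.IsEtale g → LeftOrth f g] := by
  tfae_have 1 ↔ 2 := R.isEquiv_iff_bijective_comp_right f
  tfae_have 2 → 3 := fun h X Y g hX hY => leftOrth_of_bijective_comp_right g (h X hX) (h Y hY)
  tfae_have 3 → 4 := fun h X Y g hg =>
    LeftOrth.of_isPullbackSq hg (h _ _ (R.map g) (R.local_L X) (R.local_L Y))
  tfae_have 4 → 2 := fun h X hX =>
    (h X (R.L PUnit) (fun _ => default)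
      (R.isEtale_of_isLocal hX (R.local_L _))).bijective_comp_right
  tfae_finish
end

section
/- Let L be a reflective subuniverse of types presented by a family of maps {f_i : A_i → B_i}. Then every unit map η_X : X → L X is left orthogonal to every map that is right orthogonal to all the maps f_i; that is, the units lie in ⊥({f_i}^⊥). -/
/-!
Let `W = L X ×_Z Y` be the pullback of `g` along the bottom map `v : L X → Z` of a square
from `η_X` to `g`. A type `T` is `f_i`-local exactly when `T → 1` is right orthogonal to `f_i`,
and right orthogonal maps are stable under pullback and composition; so `W → L X → 1` is right
orthogonal to every `f_i`, i.e. `W` is local. The unit is left orthogonal to any map between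
local types, in particular to `W → L X`, and a filler against `W → L X` is the same as a filler
against `g`.
-/

universe u

open Function

section Orthogonality

variable {A B : Type u}

theorem leftOrth_const_iff (h : A → B) (T : Type u) :
    LeftOrth h (fun _ : T => PUnit.unit) ↔ Bijective (fun k : B → T => k ∘ h) := by
  refine ⟨fun H => ⟨fun k₁ k₂ hk => ?_, fun u => ?_⟩, fun H u v _ => ?_⟩
  · obtain ⟨d, -, hd⟩ := H (k₂ ∘ h) (fun _ => PUnit.unit) rfl
    exact (hd k₁ ⟨hk, rfl⟩).trans (hd k₂ ⟨rfl, rfl⟩).symm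
  · obtain ⟨d, ⟨hd, -⟩, -⟩ := H u (fun _ => PUnit.unit) rfl
    exact ⟨d, hd⟩
  · obtain ⟨d, hd⟩ := H.2 u
    exact ⟨d, ⟨hd, rfl⟩, fun d' hd' => H.1 (hd'.1.trans hd.symm)⟩

variable {h : A → B}

theorem LeftOrth.comp {Y₁ Y₂ Y₃ : Type u} {g₁ : Y₁ → Y₂} {g₂ : Y₂ → Y₃}
    (h₁ : LeftOrth h g₁) (h₂ : LeftOrth h g₂) : LeftOrth h (g₂ ∘ g₁) := by
  intro u v huv
  obtain ⟨e, ⟨he, hev⟩, he_uniq⟩ := h₂ (g₁ ∘ u) v huv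
  obtain ⟨d, ⟨hd, hde⟩, hd_uniq⟩ := h₁ u e he.symm
  refine ⟨d, ⟨hd, by rw [comp_assoc, hde, hev]⟩, fun d' ⟨hd', hd'v⟩ => hd_uniq d' ⟨hd', ?_⟩⟩
  exact he_uniq (g₁ ∘ d') ⟨by rw [comp_assoc, hd'], hd'v⟩

theorem LeftOrth.pullback_fst {T Y Z : Type u} {g : Y → Z} (hg : LeftOrth h g) (v : T → Z) :
    LeftOrth h (Pullback.fst : Pullback v g → T) := by
  intro u w huw
  have hsq : g ∘ (Pullback.snd ∘ u) = (v ∘ w) ∘ h := by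
    rw [comp_assoc, ← huw, ← comp_assoc, ← comp_assoc, pullback_comm_sq]
  obtain ⟨e, ⟨he, hew⟩, he_uniq⟩ := hg _ _ hsq
  refine ⟨fun b => ⟨(w b, e b), congrFun hew b |>.symm⟩, ⟨?_, rfl⟩, fun d ⟨hd, hdw⟩ => ?_⟩
  · funext a
    exact Subtype.ext (Prod.ext (congrFun huw a).symm (congrFun he a))
  · have hde : Pullback.snd ∘ d = e := by
      refine he_uniq _ ⟨by rw [comp_assoc, hd], ?_⟩
      rw [← comp_assoc, ← pullback_comm_sq, comp_assoc, hdw]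
    funext b
    exact Subtype.ext (Prod.ext (congrFun hdw b) (congrFun hde b))

/-- A filler against `g` amounts to a filler against the pullback of `g` along the bottom map
`v` whose bottom triangle is the identity. -/
theorem leftOrth_of_leftOrth_pullback_fst {Y Z : Type u} {g : Y → Z}
    (H : ∀ v : B → Z, LeftOrth h (Pullback.fst : Pullback v g → B)) : LeftOrth h g := by
  intro u v huv
  obtain ⟨s, ⟨hs, hs_fst⟩, hs_uniq⟩ :=
    H v (fun a => ⟨(h a, u a), congrFun huv a |>.symm⟩) id rfl
  refine ⟨Pullback.snd ∘ s, ⟨by rw [comp_assoc, hs]; rfl, ?_⟩, fun d ⟨hd, hdv⟩ => ?_⟩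
  · rw [← comp_assoc, ← pullback_comm_sq, comp_assoc, hs_fst, comp_id]
  · have := hs_uniq (fun b => ⟨(b, d b), congrFun hdv b |>.symm⟩)
      ⟨funext fun a => Subtype.ext (Prod.ext rfl (congrFun hd a)), rfl⟩
    rw [← this]
    rfl

end Orthogonality

theorem ReflSub.leftOrth_unit_of_isLocal (R : ReflSub.{u}) (X : Type u) {Y Z : Type u}
    (g : Y → Z) (hY : R.IsLocal Y) (hZ : R.IsLocal Z) : LeftOrth (R.unit X) g := by
  intro u v huv
  obtain ⟨d, hd : d ∘ R.unit X = u⟩ := (R.univ X Y hY).2 u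
  refine ⟨d, ⟨hd, (R.univ X Z hZ).1 ?_⟩, fun d' hd' => (R.univ X Y hY).1 (hd'.1.trans hd.symm)⟩
  change g ∘ d ∘ R.unit X = v ∘ R.unit X
  rw [hd, huv]

/-- If `L` is presented by a family of maps `f i : A i → B i`, then every unit
`η_X : X → L X` is left orthogonal to every map that is right orthogonal to
all the maps `f i`; that is, the units lie in `⊥({f i}^⊥)`. -/
theorem stmt_5 (R : ReflSub.{u}) (I : Type u) (A B : I → Type u)
    (f : ∀ i, A i → B i)
    (hpres : ∀ X : Type u, R.IsLocal X ↔
      ∀ i, Function.Bijective (fun h : B i → X => h ∘ f i)) :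
    ∀ (X Y Z : Type u) (g : Y → Z),
      (∀ i, LeftOrth (f i) g) → LeftOrth (R.unit X) g := by
  intro X Y Z g hg
  refine leftOrth_of_leftOrth_pullback_fst fun v => ?_
  have hW : R.IsLocal (Pullback v g) := by
    refine (hpres _).2 fun i => (leftOrth_const_iff (f i) _).1 ?_
    have hLX := (leftOrth_const_iff (f i) (R.L X)).2 ((hpres _).1 (R.local_L X) i)
    exact ((hg i).pullback_fst v).comp hLX
  exact R.leftOrth_unit_of_isLocal X _ hW (R.local_L X)
end

section
/- Let L be a reflective subuniverse of types. Then every L-connected map is an L-equivalence. -/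
universe u

/-!
Maps into an `L`-local type cannot distinguish the points of a fiber of an `L`-connected map
`f : A → B`, so precomposition with `f` is a bijection `(B → Z) ≃ (A → Z)` for every local `Z`.
Through the units this says that precomposition with `L f` is a bijection
`(L B → Z) ≃ (L A → Z)`, and since `L A` and `L B` are themselves local, the Yoneda argument
makes `L f` a bijection.
-/

open Function

theorem Function.bijective_of_precomp_bijective {X Y : Sort*} (h : X → Y)
    (hX : Surjective fun k : Y → X => k ∘ h) (hY : Injective fun k : Y → Y => k ∘ h) :
    Bijective h := by
  obtain ⟨k, hk⟩ := hX id
  have hhk : h ∘ k = id := hY (by simp only [comp_assoc, hk, comp_id, id_comp])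
  exact ⟨LeftInverse.injective (g := k) (congrFun hk), RightInverse.surjective (congrFun hhk)⟩

namespace ReflSub

variable (R : ReflSub.{u})

theorem precomp_map_bijective {A B Z : Type u} (f : A → B) (hZ : R.IsLocal Z)
    (hf : Bijective fun v : B → Z => v ∘ f) :
    Bijective fun g : R.L B → Z => g ∘ R.map f := by
  have hsquare : ((fun g : R.L A → Z => g ∘ R.unit A) ∘ fun g : R.L B → Z => g ∘ R.map f) =
      (fun v : B → Z => v ∘ f) ∘ fun g : R.L B → Z => g ∘ R.unit B := by
    funext g
    simp only [comp_apply, comp_assoc, map_comp_unit]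
  rw [← (R.univ A Z hZ).of_comp_iff', hsquare]
  exact hf.comp (R.univ B Z hZ)

theorem isEquiv_of_precomp_bijective {A B : Type u} (f : A → B)
    (hf : ∀ Z, R.IsLocal Z → Bijective fun v : B → Z => v ∘ f) : R.IsEquiv f :=
  bijective_of_precomp_bijective (R.map f)
    (R.precomp_map_bijective f (R.local_L A) (hf _ (R.local_L A))).2
    (R.precomp_map_bijective f (R.local_L B) (hf _ (R.local_L B))).1

theorem const_bijective_of_connected {X Z : Type u} (hX : ∃ c : R.L X, ∀ w, w = c)
    (hZ : R.IsLocal Z) : Bijective (const X : Z → X → Z) := by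
  obtain ⟨c, hc⟩ := hX
  have : Nonempty (R.L X) := ⟨c⟩
  have hconst : Bijective (const (R.L X) : Z → R.L X → Z) :=
    ⟨const_injective, fun g => ⟨g c, funext fun w => by rw [hc w]; rfl⟩⟩
  exact (R.univ X Z hZ).comp hconst

variable {R} in
theorem IsConnMap.precomp_bijective {A B Z : Type u} {f : A → B} (hf : R.IsConnMap f)
    (hZ : R.IsLocal Z) : Bijective fun v : B → Z => v ∘ f := by
  have hfib (b : B) := R.const_bijective_of_connected (hf b) hZ
  refine ⟨fun v v' hvv' => funext fun b => (hfib b).1 (funext fun x => ?_), fun u => ?_⟩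
  · simpa only [const_apply, comp_apply, x.2] using congrFun hvv' x.1
  · exact ⟨fun b => surjInv (hfib b).2 fun x => u x.1,
      funext fun a => congrFun (surjInv_eq (hfib (f a)).2 fun x => u x.1) ⟨a, rfl⟩⟩

end ReflSub

/-- Every `L`-connected map is an `L`-equivalence. -/
theorem stmt_7 (R : ReflSub.{u}) (A B : Type u) (f : A → B)
    (hf : R.IsConnMap f) :
    R.IsEquiv f :=
  R.isEquiv_of_precomp_bijective f fun _ hZ => hf.precomp_bijective hZ
end

section
/- Let L be a reflective subuniverse of types all of whose unit maps η_X : X → L X are surjective. Consider a commuting square with top map g : E' → E, bottom map f : B' → B, left map p' : E' → B', and right map p : E → B, in which p and p' are L-étale and f is an L-equivalence. Then the square is a pullback square if and only if g is an L-equivalence. -/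
universe u

/-!
Paste the given square with the naturality square of `p`, which is a pullback since `p` is
`L`-étale. By naturality of `η`, the composite rectangle is also the naturality square of `p'`
pasted with the `L`-image of the given square. Since both naturality squares are pullbacks, the
pasting lemmas show that the given square is a pullback iff the rectangle is, iff the `L`-image
square is (this direction needs `η_{B'}` to be surjective). Finally, a commuting square whose
bottom `L f` is a bijection is a pullback iff its top `L g` is a bijection.
-/

open Function

section Pasting

variable {P A B C D F : Type u} {pa : P → A} {pb : P → B} {f : A → C} {g : B → C}
  {qb : B → D} {h : C → F} {k : D → F}

theorem IsPullbackSq.paste (h₁ : IsPullbackSq pa pb f g) (h₂ : IsPullbackSq g qb h k) :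
    IsPullbackSq pa (qb ∘ pb) (h ∘ f) k := by
  refine ⟨fun x => by simp only [comp_apply, h₁.1, h₂.1], fun a d had => ?_⟩
  obtain ⟨b, ⟨hgb, hqb⟩, hb_uniq⟩ := h₂.2 (f a) d had
  obtain ⟨x, ⟨hxa, hxb⟩, hx_uniq⟩ := h₁.2 a b hgb.symm
  refine ⟨x, ⟨hxa, by rw [comp_apply, hxb, hqb]⟩, fun y ⟨hya, hyd⟩ => hx_uniq y ⟨hya, ?_⟩⟩
  exact hb_uniq (pb y) ⟨by rw [← h₁.1, hya], hyd⟩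

theorem IsPullbackSq.of_paste (h₂ : IsPullbackSq g qb h k)
    (hc : IsPullbackSq pa (qb ∘ pb) (h ∘ f) k) (hcomm : ∀ x, f (pa x) = g (pb x)) :
    IsPullbackSq pa pb f g := by
  refine ⟨hcomm, fun a b hab => ?_⟩
  obtain ⟨x, ⟨hxa, hxd⟩, hx_uniq⟩ := hc.2 a (qb b) (by rw [comp_apply, hab, h₂.1])
  obtain ⟨b₀, -, hb₀_uniq⟩ := h₂.2 (f a) (qb b) (by rw [hab, h₂.1])
  have hxb : pb x = b :=
    (hb₀_uniq (pb x) ⟨by rw [← hcomm, hxa], hxd⟩).trans (hb₀_uniq b ⟨hab.symm, rfl⟩).symm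
  exact ⟨x, ⟨hxa, hxb⟩, fun y ⟨hya, hyb⟩ => hx_uniq y ⟨hya, by rw [comp_apply, hyb]⟩⟩

theorem IsPullbackSq.of_paste_of_surjective (h₁ : IsPullbackSq pa pb f g)
    (hc : IsPullbackSq pa (qb ∘ pb) (h ∘ f) k) (hf : Surjective f)
    (hcomm : ∀ b, h (g b) = k (qb b)) : IsPullbackSq g qb h k := by
  refine ⟨hcomm, fun c d hcd => ?_⟩
  obtain ⟨a, rfl⟩ := hf c
  obtain ⟨x, ⟨hxa, hxd⟩, hx_uniq⟩ := hc.2 a d hcd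
  refine ⟨pb x, ⟨by rw [← h₁.1, hxa], hxd⟩, fun b ⟨hgb, hqb⟩ => ?_⟩
  obtain ⟨y, ⟨hya, hyb⟩, -⟩ := h₁.2 a b hgb.symm
  rw [← hyb, hx_uniq y ⟨hya, by rw [comp_apply, hyb, hqb]⟩]

theorem isPullbackSq_iff_bijective (hf : Bijective f) (hcomm : ∀ x, f (pa x) = g (pb x)) :
    IsPullbackSq pa pb f g ↔ Bijective pb := by
  refine ⟨fun hpb => ⟨fun x y hxy => ?_, fun b => ?_⟩, fun hpb => ⟨hcomm, fun a b hab => ?_⟩⟩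
  · have hpa : pa x = pa y := hf.1 (by rw [hcomm, hcomm, hxy])
    exact (hpb.2 (pa y) (pb y) (hcomm y)).unique ⟨hpa, hxy⟩ ⟨rfl, rfl⟩
  · obtain ⟨a, ha⟩ := hf.2 (g b)
    obtain ⟨x, ⟨-, hxb⟩, -⟩ := hpb.2 a b ha
    exact ⟨x, hxb⟩
  · obtain ⟨x, rfl⟩ := hpb.2 b
    exact ⟨x, ⟨hf.1 (by rw [hcomm, hab]), rfl⟩, fun y hy => hpb.1 hy.2⟩

end Pasting

namespace ReflSub

variable (R : ReflSub.{u}) {X Y Z : Type u}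

theorem hom_ext {φ ψ : R.L X → Z} (hZ : R.IsLocal Z) (h : φ ∘ R.unit X = ψ ∘ R.unit X) :
    φ = ψ :=
  (R.univ X Z hZ).1 h

theorem map_comp_unit_s8 (h : X → Y) : R.map h ∘ R.unit X = R.unit Y ∘ h :=
  surjInv_eq (R.univ X (R.L Y) (R.local_L Y)).2 (R.unit Y ∘ h)

theorem map_unit (h : X → Y) (x : X) : R.map h (R.unit X x) = R.unit Y (h x) :=
  congrFun (R.map_comp_unit_s8 h) x

theorem map_comp (h : X → Y) (k : Y → Z) : R.map (k ∘ h) = R.map k ∘ R.map h :=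
  R.hom_ext (R.local_L Z) <| funext fun x => by simp only [comp_apply, map_unit]

end ReflSub

/-- Suppose all unit maps of `L` are surjective.  For a commuting square with
top `g : E' → E`, bottom `f : B' → B`, left `p' : E' → B'`, right `p : E → B`,
in which `p` and `p'` are `L`-étale and `f` is an `L`-equivalence: the square
is a pullback square iff `g` is an `L`-equivalence. -/
theorem stmt_8 (R : ReflSub.{u})
    (hsurj : ∀ X : Type u, Function.Surjective (R.unit X))
    (E' E B' B : Type u) (g : E' → E) (f : B' → B) (p' : E' → B') (p : E → B)
    (hcomm : ∀ e' : E', f (p' e') = p (g e'))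
    (hp : R.IsEtale p) (hp' : R.IsEtale p') (hf : R.IsEquiv f) :
    IsPullbackSq p' g f p ↔ R.IsEquiv g := by
  have hcommL : R.map f ∘ R.map p' = R.map p ∘ R.map g := by
    rw [← R.map_comp, ← R.map_comp]
    exact congrArg R.map (funext hcomm)
  calc IsPullbackSq p' g f p
      ↔ IsPullbackSq p' (R.unit E ∘ g) (R.unit B ∘ f) (R.map p) :=
        ⟨fun h => h.paste hp, fun h => hp.of_paste h hcomm⟩
    _ ↔ IsPullbackSq p' (R.map g ∘ R.unit E') (R.map f ∘ R.unit B') (R.map p) := by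
        rw [R.map_comp_unit_s8, R.map_comp_unit_s8]
    _ ↔ IsPullbackSq (R.map p') (R.map g) (R.map f) (R.map p) :=
        ⟨fun h => hp'.of_paste_of_surjective h (hsurj B') (congrFun hcommL), hp'.paste⟩
    _ ↔ R.IsEquiv g := isPullbackSq_iff_bijective hf (congrFun hcommL)
end

section
/- Let L be a reflective subuniverse of types that is a modality. Then a map is L-étale if and only if it is right orthogonal to every L-equivalence. -/
universe u

/-!
An étale map `g` is the pullback of `L g : L X → L Y` along `η_Y`. A map between local
types is right orthogonal to every `L`-equivalence, since precomposition with an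
`L`-equivalence is a bijection on maps into a local type; and right orthogonality is
stable under pullback.

Conversely, for a modality the fibers of `η_Y` have contractible localization (by
dependent elimination into the local family `w ↦ L (fib_{η_Y} w)`). Hence every map from
`Y ×_{L Y} L X` into a local type factors through the projection to `L X`, which makes
the gap map `X → Y ×_{L Y} L X` an `L`-equivalence. If `g` is right orthogonal to it, the
filler of the square `(id, fst)` is an inverse of the gap map, so `g` is étale.
-/

theorem LeftOrth.of_isPullbackSq_s10 {A B P C D E : Type u} {f : A → B}
    {pa : P → C} {pb : P → D} {fc : C → E} {gd : D → E}
    (hP : IsPullbackSq pa pb fc gd) (hf : LeftOrth f gd) : LeftOrth f pa := by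
  intro u v hsq
  obtain ⟨d₀, ⟨hd₀f, hd₀v⟩, hd₀_uniq⟩ := hf (pb ∘ u) (fc ∘ v) (by
    funext a
    simp only [Function.comp_apply, ← hP.1]
    exact congrArg fc (congrFun hsq a))
  choose d hd hd_uniq using fun b => hP.2 _ _ (congrFun hd₀v b).symm
  refine ⟨d, ⟨funext fun a => ?_, funext fun b => (hd b).1⟩, fun d' ⟨hd'f, hd'v⟩ => ?_⟩
  · exact (hd_uniq (f a) (u a) ⟨congrFun hsq a, (congrFun hd₀f a).symm⟩).symm
  · have hpb : pb ∘ d' = d₀ := hd₀_uniq _ ⟨by rw [Function.comp_assoc, hd'f], by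
      funext b
      simp only [Function.comp_apply, ← hP.1, ← congrFun hd'v b]⟩
    exact funext fun b => hd_uniq b _ ⟨congrFun hd'v b, congrFun hpb b⟩

namespace ReflSub

variable (R : ReflSub.{u})

theorem map_unit_s10 {A B : Type u} (f : A → B) (a : A) :
    R.map f (R.unit A a) = R.unit B (f a) :=
  congrFun (Function.surjInv_eq (R.univ A (R.L B) (R.local_L B)).2 (R.unit B ∘ f)) a

theorem hom_ext_s10 {A Z : Type u} (hZ : R.IsLocal Z) {h₁ h₂ : R.L A → Z}
    (h : ∀ a, h₁ (R.unit A a) = h₂ (R.unit A a)) : h₁ = h₂ :=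
  (R.univ A Z hZ).1 (funext h)

theorem exists_extend {A Z : Type u} (hZ : R.IsLocal Z) (t : A → Z) :
    ∃ T : R.L A → Z, ∀ a, T (R.unit A a) = t a :=
  let ⟨T, hT⟩ := (R.univ A Z hZ).2 t
  ⟨T, congrFun hT⟩

variable {R}

theorem IsEquiv.comp_bijective {A B Z : Type u} {f : A → B} (hf : R.IsEquiv f)
    (hZ : R.IsLocal Z) : Function.Bijective fun t : B → Z => t ∘ f := by
  have hcomm : (fun t : B → Z => t ∘ f) ∘ (fun T : R.L B → Z => T ∘ R.unit B)
      = (fun T : R.L A → Z => T ∘ R.unit A) ∘ (fun T : R.L B → Z => T ∘ R.map f) := by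
    funext T a
    simp only [Function.comp_apply, R.map_unit_s10]
  rw [← Function.Bijective.of_comp_iff _ (R.univ B Z hZ), hcomm]
  exact (R.univ A Z hZ).comp hf.comp_right

theorem IsEquiv.leftOrth_of_isLocal {A B X Y : Type u} {f : A → B} (hf : R.IsEquiv f)
    (hX : R.IsLocal X) (hY : R.IsLocal Y) (h : X → Y) : LeftOrth f h := by
  intro u v hsq
  obtain ⟨d, hd : d ∘ f = u⟩ := (hf.comp_bijective hX).2 u
  refine ⟨d, ⟨hd, (hf.comp_bijective hY).1 ?_⟩,
    fun d' hd' => (hf.comp_bijective hX).1 (hd'.1.trans hd.symm)⟩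
  change h ∘ (d ∘ f) = v ∘ f
  rw [hd, hsq]

theorem IsEtale.leftOrth {A B X Y : Type u} {f : A → B} {g : X → Y} (hg : R.IsEtale g)
    (hf : R.IsEquiv f) : LeftOrth f g :=
  LeftOrth.of_isPullbackSq_s10 hg (hf.leftOrth_of_isLocal (R.local_L X) (R.local_L Y) (R.map g))

theorem IsModality.exists_dep_extend (hmod : R.IsModality) {W : Type u}
    (Q : R.L W → Type u) (hQ : ∀ w, R.IsLocal (Q w)) (q : ∀ x, Q (R.unit W x)) :
    ∃ S : ∀ w, Q w, ∀ x, S (R.unit W x) = q x := by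
  obtain ⟨s, hs⟩ := R.exists_extend (hmod _ Q (R.local_L W) hQ)
    fun x => (⟨R.unit W x, q x⟩ : Σ w, Q w)
  have hfst : ∀ w, (s w).1 = w :=
    congrFun (R.hom_ext_s10 (R.local_L W) (h₁ := fun w => (s w).1) (h₂ := id) fun x => by
      simp only [hs, id])
  refine ⟨fun w => hfst w ▸ (s w).2, fun x => eq_of_heq ?_⟩
  exact (eqRec_heq _ _).trans (Sigma.ext_iff.1 (hs x)).2

theorem IsModality.isConnMap_unit (hmod : R.IsModality) (Y : Type u) :
    R.IsConnMap (R.unit Y) := by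
  intro w
  obtain ⟨S, hS⟩ := hmod.exists_dep_extend (fun w => R.L {y // R.unit Y y = w})
    (fun _ => R.local_L _) fun y => R.unit _ ⟨y, rfl⟩
  refine ⟨S w, fun v => congrFun (R.hom_ext_s10 (R.local_L _) (h₁ := id) (h₂ := fun _ => S w) ?_) v⟩
  rintro ⟨y, rfl⟩
  exact (hS y).symm

theorem IsConnMap.exists_const {E W Z : Type u} {p : E → W} (hp : R.IsConnMap p)
    (hZ : R.IsLocal Z) (w : W) (t : {e // p e = w} → Z) : ∃ z, ∀ e, t e = z := by
  obtain ⟨c, hc⟩ := hp w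
  obtain ⟨T, hT⟩ := R.exists_extend hZ t
  exact ⟨T c, fun e => by rw [← hT, hc (R.unit _ e)]⟩

variable (R)

def gapMap {X Y : Type u} (g : X → Y) (x : X) : Function.Pullback (R.unit Y) (R.map g) :=
  ⟨(g x, R.unit X x), (R.map_unit_s10 g x).symm⟩

variable {R}

theorem IsModality.exists_factor_snd (hmod : R.IsModality) {X Y Z : Type u} (g : X → Y)
    (hZ : R.IsLocal Z) (t : Function.Pullback (R.unit Y) (R.map g) → Z) :
    ∃ τ : R.L X → Z, ∀ p, t p = τ p.snd := by
  choose τ hτ using fun z =>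
    (hmod.isConnMap_unit Y).exists_const hZ (R.map g z) fun a => t ⟨(a.1, z), a.2⟩
  exact ⟨τ, fun ⟨(y, z), h⟩ => hτ z ⟨y, h⟩⟩

theorem IsModality.isEquiv_gapMap (hmod : R.IsModality) {X Y : Type u} (g : X → Y) :
    R.IsEquiv (R.gapMap g) := by
  obtain ⟨r, hr⟩ := R.exists_extend (R.local_L X)
    (Function.Pullback.snd : Function.Pullback (R.unit Y) (R.map g) → R.L X)
  obtain ⟨τ, hτ⟩ := hmod.exists_factor_snd g (R.local_L _) (R.unit _)
  have hτ_eq : τ = R.map (R.gapMap g) :=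
    R.hom_ext_s10 (R.local_L _) fun x => (hτ (R.gapMap g x)).symm.trans (R.map_unit_s10 _ x).symm
  refine Function.bijective_iff_has_inverse.2 ⟨r,
    Function.leftInverse_iff_comp.2 (R.hom_ext_s10 (R.local_L X) fun x => ?_),
    Function.rightInverse_iff_comp.2 (R.hom_ext_s10 (R.local_L _) fun p => ?_)⟩
  · change r (R.map _ (R.unit X x)) = R.unit X x
    rw [R.map_unit_s10, hr]
    rfl
  · change R.map _ (r (R.unit _ p)) = R.unit _ p
    rw [hr, ← hτ_eq, ← hτ]

theorem isEtale_of_bijective_gapMap {X Y : Type u} {g : X → Y}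
    (h : Function.Bijective (R.gapMap g)) : R.IsEtale g := by
  refine ⟨fun x => (R.map_unit_s10 g x).symm, fun y z hyz => ?_⟩
  simpa only [gapMap, Subtype.ext_iff, Prod.ext_iff] using h.existsUnique ⟨(y, z), hyz⟩

theorem isEtale_of_leftOrth_gapMap {X Y : Type u} {g : X → Y} (he : R.IsEquiv (R.gapMap g))
    (h : LeftOrth (R.gapMap g) g) : R.IsEtale g := by
  obtain ⟨d, ⟨hde, hgd⟩, -⟩ := h id Function.Pullback.fst rfl
  have hηd : R.unit X ∘ d = Function.Pullback.snd :=
    (he.comp_bijective (R.local_L X)).1 (by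
      change R.unit X ∘ (d ∘ R.gapMap g) = _
      rw [hde]
      rfl)
  exact isEtale_of_bijective_gapMap (Function.bijective_iff_has_inverse.2
    ⟨d, congrFun hde, fun p => Subtype.ext (Prod.ext (congrFun hgd p) (congrFun hηd p))⟩)

end ReflSub

/-- If `L` is a modality, then a map is `L`-étale iff it is right orthogonal
to every `L`-equivalence. -/
theorem stmt_10 (R : ReflSub.{u}) (hmod : R.IsModality)
    (X Y : Type u) (g : X → Y) :
    R.IsEtale g ↔
      ∀ (A B : Type u) (f : A → B), R.IsEquiv f → LeftOrth f g := by
  refine ⟨fun hg _ _ _ hf => hg.leftOrth hf, fun h => ?_⟩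
  have he := hmod.isEquiv_gapMap g
  exact ReflSub.isEtale_of_leftOrth_gapMap he (h _ _ _ he)
end

section
/- Let L be the nullification at a family of types {B_i}, i.e., the reflective subuniverse presented by the maps f_i : B_i → 1 to the one-point type. Then a map g : X → Y is right orthogonal to every map f_i if and only if g is L-local. -/
universe u

/-- Every commuting square from `A → 1` to `g` is a point `y` together with a map from `A`
into the fibre over `y`, and its diagonal fillers are the points of that fibre whose
constant map is the given one. -/
theorem leftOrth_toPUnit_iff {A X Y : Type u} (g : X → Y) :
    LeftOrth (fun _ : A => PUnit.unit.{u + 1}) g ↔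
      ∀ y, Function.Bijective (fun (x : {x : X // g x = y}) (_ : A) => x) := by
  simp only [Function.bijective_iff_existsUnique]
  constructor
  · intro horth y φ
    obtain ⟨d, ⟨hdu, hdv⟩, hd_unique⟩ :=
      horth (fun a => (φ a).1) (fun _ => y) (funext fun a => (φ a).2)
    refine ⟨⟨d PUnit.unit, congrFun hdv _⟩, funext fun a => Subtype.ext (congrFun hdu a), ?_⟩
    rintro x rfl
    exact Subtype.ext (congrFun (hd_unique (fun _ => x.1) ⟨rfl, funext fun _ => x.2⟩) _)
  · intro hfib u v huv
    obtain ⟨x, hxu, hx_unique⟩ := hfib (v PUnit.unit) (fun a => ⟨u a, congrFun huv a⟩)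
    refine ⟨fun _ => x.1,
      ⟨funext fun a => congrArg Subtype.val (congrFun hxu a), funext fun _ => x.2⟩, ?_⟩
    rintro d ⟨hdu, hdv⟩
    have hdx : (⟨d PUnit.unit, congrFun hdv _⟩ : {x' : X // g x' = v PUnit.unit}) = x :=
      hx_unique _ (funext fun a => Subtype.ext (congrFun hdu a))
    exact funext fun _ => congrArg Subtype.val hdx

/-- If `L` is the nullification at a family of types `B i` (i.e. presented by
the maps `f i : B i → 1`), then a map `g` is right orthogonal to every `f i`
iff `g` is `L`-local. -/
theorem stmt_11 (R : ReflSub.{u}) (I : Type u) (B : I → Type u)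
    (hnull : ∀ X : Type u, R.IsLocal X ↔
      ∀ i, Function.Bijective (fun (x : X) (_ : B i) => x))
    (X Y : Type u) (g : X → Y) :
    (∀ i, LeftOrth (fun _ : B i => PUnit.unit.{u + 1}) g) ↔
      R.IsLocalMap g := by
  simp only [leftOrth_toPUnit_iff, ReflSub.IsLocalMap, hnull]
  exact forall_comm
end

section
/- Let L be the nullification at a family of types {B_i}. Then a map g : X → Y is right orthogonal to every unit map η_A : A → L A if and only if g is L-local. -/
/-!
For a reflective subuniverse, a lifting problem of `η_A` against `g` is the same as a section over
`L A` of the pullback of `g` along the bottom map; when that pullback is local, the universal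
property of `η_A` produces the section and makes it unique. For a nullification the pullback is
local as soon as `g` is a local map, since null types are closed under dependent sums.
Conversely, orthogonality against `η_F`, for `F` a fiber of `g`, makes `F` a retract of `L F`,
and null types are closed under retracts.
-/

universe u

def IsNull {I : Type u} (B : I → Type u) (X : Type u) : Prop :=
  ∀ i, Function.Bijective (fun (x : X) (_ : B i) => x)

namespace IsNull

variable {I : Type u} {B : I → Type u}

theorem of_leftInverse {F G : Type u} (s : F → G) (r : G → F) (hrs : Function.LeftInverse r s)
    (hG : IsNull B G) : IsNull B F := by
  intro i
  constructor
  · intro a a' h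
    rw [← hrs a, ← hrs a']
    exact congrArg r ((hG i).1 (congrArg (s ∘ ·) h))
  · intro φ
    obtain ⟨c, hc⟩ := (hG i).2 (s ∘ φ)
    refine ⟨r c, funext fun b => ?_⟩
    show r c = φ b
    rw [show c = s (φ b) from congrFun hc b, hrs]

theorem of_equiv {F G : Type u} (e : F ≃ G) (hG : IsNull B G) : IsNull B F :=
  of_leftInverse e e.symm e.left_inv hG

theorem sigma {Z : Type u} {P : Z → Type u} (hZ : IsNull B Z) (hP : ∀ z, IsNull B (P z)) :
    IsNull B (Σ z, P z) := by
  intro i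
  constructor
  · rintro ⟨z, p⟩ ⟨z', p'⟩ h
    obtain rfl : z = z' := (hZ i).1 (congrArg (Sigma.fst ∘ ·) h)
    have hp : (fun _ : B i => p) = fun _ => p' :=
      funext fun b => eq_of_heq (Sigma.mk.inj_iff.1 (congrFun h b)).2
    rw [(hP z i).1 hp]
  · intro φ
    obtain ⟨z, hz⟩ := (hZ i).2 (Sigma.fst ∘ φ)
    have hφz : ∀ b, (φ b).1 = z := fun b => (congrFun hz b).symm
    obtain ⟨p, hp⟩ := (hP z i).2 fun b => hφz b ▸ (φ b).2
    refine ⟨⟨z, p⟩, funext fun b => Sigma.ext (hφz b).symm ?_⟩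
    show p ≍ (φ b).2
    rw [show p = _ from congrFun hp b]
    exact eqRec_heq _ _

end IsNull

namespace ReflSub

variable (R : ReflSub.{u})

theorem unit_leftOrth_of_isLocal_pullback {A X Y : Type u} (g : X → Y)
    (hpb : ∀ v : R.L A → Y, R.IsLocal {p : R.L A × X // g p.2 = v p.1}) :
    LeftOrth (R.unit A) g := by
  intro u v hsq
  set C := {p : R.L A × X // g p.2 = v p.1}
  have hC := R.univ A C (hpb v)
  let graph (d : R.L A → X) (hd : g ∘ d = v) : R.L A → C :=
    fun z => ⟨(z, d z), congrFun hd z⟩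
  obtain ⟨K, hK⟩ := hC.2 fun a => (⟨(R.unit A a, u a), congrFun hsq a⟩ : C)
  have hKfst : ∀ z, (K z).1.1 = z := congrFun <|
    (R.univ A _ (R.local_L A)).1 (funext fun a => congrArg (·.1.1) (congrFun hK a) : _ = id ∘ _)
  have hd : g ∘ (fun z => (K z).1.2) = v :=
    funext fun z => (K z).2.trans (congrArg v (hKfst z))
  refine ⟨fun z => (K z).1.2, ⟨funext fun a => congrArg (·.1.2) (congrFun hK a), hd⟩, ?_⟩
  rintro d' ⟨hd'u, hd'v⟩
  have hgraph : graph d' hd'v = K := hC.1 <| hK ▸ funext fun a => by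
    simp only [graph, Function.comp_apply, ← congrFun hd'u a]
  exact funext fun z => congrArg (·.1.2) (congrFun hgraph z)

theorem exists_leftInverse_unit_fiber_of_leftOrth {X Y : Type u} (g : X → Y) (y : Y)
    (h : LeftOrth (R.unit {x // g x = y}) g) :
    ∃ r : R.L {x // g x = y} → {x // g x = y}, Function.LeftInverse r (R.unit _) := by
  obtain ⟨d, ⟨hdu, hdv⟩, -⟩ := h Subtype.val (fun _ => y) (funext Subtype.property)
  exact ⟨fun z => ⟨d z, congrFun hdv z⟩, fun a => Subtype.ext (congrFun hdu a)⟩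

end ReflSub

/-- If `L` is the nullification at a family of types `B i`, then a map `g` is
right orthogonal to every unit `η_A : A → L A` iff `g` is `L`-local. -/
theorem stmt_12 (R : ReflSub.{u}) (I : Type u) (B : I → Type u)
    (hnull : ∀ X : Type u, R.IsLocal X ↔
      ∀ i, Function.Bijective (fun (x : X) (_ : B i) => x))
    (X Y : Type u) (g : X → Y) :
    (∀ A : Type u, LeftOrth (R.unit A) g) ↔ R.IsLocalMap g := by
  have hL (A : Type u) : IsNull B (R.L A) := (hnull _).1 (R.local_L A)
  constructor
  · intro h y
    obtain ⟨r, hr⟩ := R.exists_leftInverse_unit_fiber_of_leftOrth g y (h _)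
    exact (hnull _).2 (IsNull.of_leftInverse _ r hr (hL _))
  · intro hloc A
    refine R.unit_leftOrth_of_isLocal_pullback g fun v => (hnull _).2 ?_
    exact IsNull.of_equiv (Equiv.subtypeProdEquivSigmaSubtype fun z x => g x = v z)
      (IsNull.sigma (hL A) fun z => (hnull _).1 (hloc (v z)))
end
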